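/- arXiv:2505.06769 — 3 statements merged into one kernel-verified Lean document; each statement's English description precedes it below -/
import Mathlib

section
/- Let M be a Markov chain with k ≥ 1 levels in which every state can reach T along edges, with weight function w : S → (0,∞), SSP Bellman update L, and initial vectors v̲_0, v̄_0. Then for every integer t ≥ 1, every 0 ≤ i ≤ k, and every state s in level ℓ_i: (L^{k·t} v̄_0)(s) − (L^{k·t} v̲_0)(s) ≤ (1 − p_min^i)·(1 − p_min^k)^{t−1}·C, where C := w_max·(k+1)/p_min^k and w_max := max_{s ∈ S} w(s). -/
/-- A finite Markov chain: transition function `δ` (nonnegative, rows sum to 1)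
together with a set `T` of absorbing target states. There is an edge `s → s'`
iff `δ s s' > 0`. -/
structure MC (S : Type) [Fintype S] [DecidableEq S] where
  δ : S → S → ℝ
  T : Finset S
  nonneg : ∀ s s' : S, 0 ≤ δ s s'
  rowsum : ∀ s : S, ∑ s' : S, δ s s' = 1
  absorbing : ∀ t ∈ T, δ t t = 1

variable {S : Type} [Fintype S] [DecidableEq S]

/-- Edge relation of a Markov chain: `s → s'` iff `δ s s' > 0`. -/
def MC.edge (M : MC S) (a b : S) : Prop := 0 < M.δ a b

/-- `pathLen r n a b`: there is a path of length `n` from `a` to `b` along `r`. -/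
def pathLen (r : S → S → Prop) : ℕ → S → S → Prop
  | 0 => fun a b => a = b
  | n + 1 => fun a c => ∃ b, r a b ∧ pathLen r n b c

/-- `reaches r A s`: `s` can reach the set `A` along the relation `r`. -/
def reaches (r : S → S → Prop) (A : Set S) (s : S) : Prop :=
  ∃ n, ∃ a ∈ A, pathLen r n s a

/-- Length of a shortest path from `s` to the set `A` along `r`. -/
noncomputable def distTo (r : S → S → Prop) (A : Set S) (s : S) : ℕ :=
  sInf {n | ∃ a ∈ A, pathLen r n s a}

/-- Level `0`: the targets together with all states that cannot reach the targets. -/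
def MC.level0 (M : MC S) : Set S :=
  {s | s ∈ M.T ∨ ¬ reaches M.edge (M.T : Set S) s}

/-- The levels of a Markov chain: `ℓ_0` is `level0`, and for `i ≥ 1`, `ℓ_i` is the
set of states whose shortest edge-path distance to `ℓ_0` is exactly `i`. -/
noncomputable def MC.levelSet (M : MC S) : ℕ → Set S
  | 0 => M.level0
  | i + 1 => {s | distTo M.edge M.level0 s = i + 1}

/-- `M` has (exactly) `k` levels: `ℓ_k` is the last nonempty level. -/
def MC.hasLevels (M : MC S) (k : ℕ) : Prop :=
  (M.levelSet k).Nonempty ∧ ∀ i, k < i → M.levelSet i = ∅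

/-- One-step transition matrix of the Markov chain. -/
noncomputable def MC.P (M : MC S) : Matrix S S ℝ := Matrix.of M.δ

/-- Weighted reachability value `val(s) = E_s[w(X_{t*}) · 1{t* < ∞}]`, where `t*` is
the first hitting time of `T`. Since `T` is absorbing, this equals the supremum
(monotone limit) over `n` of `∑_{t ∈ T} (δⁿ)(s,t)·w(t)`. -/
noncomputable def MC.reachVal (M : MC S) (w : S → ℝ) (s : S) : ℝ :=
  ⨆ n : ℕ, ∑ t ∈ M.T, (M.P ^ n) s t * w t

/-- Stochastic shortest path value `val(s) = E_s[∑_{t=0}^{t*} w(X_t)]`, where `t*` is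
the first hitting time of `T`: the expected weight collected strictly before `T`
(states outside `T`, counted via the `n`-step distributions) plus the expected weight
of the first target state hit. -/
noncomputable def MC.sspVal (M : MC S) (w : S → ℝ) (s : S) : ℝ :=
  (∑' n : ℕ, ∑ s' ∈ Finset.univ.filter (fun x => x ∉ M.T), (M.P ^ n) s s' * w s')
    + M.reachVal w s

/-- Smallest positive transition probability of the Markov chain. -/
noncomputable def MC.pmin (M : MC S) : ℝ :=
  sInf {p : ℝ | 0 < p ∧ ∃ s s' : S, M.δ s s' = p}

/-- Reachability Bellman update. -/
noncomputable def MC.reachUpdate (M : MC S) (w : S → ℝ) (v : S → ℝ) : S → ℝ :=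
  fun s => if s ∈ M.T then w s else ∑ s' : S, M.δ s s' * v s'

/-- SSP Bellman update. -/
noncomputable def MC.sspUpdate (M : MC S) (w : S → ℝ) (v : S → ℝ) : S → ℝ :=
  fun s => if s ∈ M.T then w s else w s + ∑ s' : S, M.δ s s' * v s'

/-- The reduced Markov chain `M[s = ·]`: the state `s` is made absorbing (its row of
`δ` replaced by the point mass at `s`) and added to the target set. -/
def MC.reduce (M : MC S) (s : S) : MC S where
  δ := fun a b => if a = s then (if b = s then 1 else 0) else M.δ a b
  T := insert s M.T
  nonneg := by
    intro a b
    by_cases h : a = s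
    · by_cases h' : b = s <;> simp [h, h']
    · simpa [h] using M.nonneg a b
  rowsum := by
    intro a
    by_cases h : a = s
    · simp [h]
    · simpa [h] using M.rowsum a
  absorbing := by
    intro t ht
    rcases Finset.mem_insert.mp ht with h | h
    · simp [h]
    · by_cases h' : t = s
      · simp [h']
      · simpa [h'] using M.absorbing t h

/-- Probability, in `M`, of ever visiting the state `s` when starting from `a`,
i.e. `P_a(∃ t ≥ 0, X_t = s)` (computed as a reachability value after making `s`
absorbing, which does not change the dynamics before the first visit to `s`). -/
noncomputable def MC.hitProb (M : MC S) (a s : S) : ℝ :=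
  (M.reduce s).reachVal (fun b => if b = s then 1 else 0) a

/-- Probability of having reached `T` within `i` steps, `P_s(∃ t ≤ i, X_t ∈ T)`;
since `T` is absorbing this equals `∑_{t ∈ T} (δ^i)(s,t)`. -/
noncomputable def MC.hitBy (M : MC S) (s : S) (i : ℕ) : ℝ :=
  ∑ t ∈ M.T, (M.P ^ i) s t

/-!
The gap `Dₙ = Lⁿ v̄₀ - Lⁿ v̲₀` evolves by the weight-free update `D ↦ (s ↦ ∑ δ(s,·) D)` off `T`
and `0` on `T`, so it vanishes on `T` and stays in every box `[0, B]` containing `D₀`. Along an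
edge `s → b` a mass `δ(s,b) ≥ p_min` sees the smaller value at `b`, so a state with a path of
length `j` to `T` has gap at most `(1 - p_min^j) B` after `j` updates. Every state has such a path
of length `k`, so each block of `k` updates shrinks the box by `1 - p_min^k`, and the last block
gives the factor `1 - p_min^i` on level `i`.
-/

omit [Fintype S] [DecidableEq S] in
lemma pathLen_append {r : S → S → Prop} {m n : ℕ} {a b c : S}
    (h₁ : pathLen r m a b) (h₂ : pathLen r n b c) : pathLen r (m + n) a c := by
  induction m generalizing a with
  | zero =>
    obtain rfl : a = b := h₁
    simpa using h₂
  | succ m ih =>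
    obtain ⟨d, had, hd⟩ := h₁
    rw [Nat.succ_add]
    exact ⟨d, had, ih hd⟩

omit [Fintype S] [DecidableEq S] in
lemma pathLen_self_of_rel {r : S → S → Prop} {a : S} (h : r a a) : ∀ n, pathLen r n a a
  | 0 => rfl
  | n + 1 => ⟨a, h, pathLen_self_of_rel h n⟩

omit [Fintype S] [DecidableEq S] in
lemma exists_pathLen_distTo {r : S → S → Prop} {A : Set S} {s : S} (h : reaches r A s) :
    ∃ a ∈ A, pathLen r (distTo r A s) s a :=
  Nat.sInf_mem h

namespace MC

variable (M : MC S)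

lemma δ_le_one (a b : S) : M.δ a b ≤ 1 :=
  M.rowsum a ▸ Finset.single_le_sum (fun c _ => M.nonneg a c) (Finset.mem_univ b)

lemma exists_edge (a : S) : ∃ b, M.edge a b := by
  obtain ⟨b, -, hb⟩ := Finset.exists_lt_of_sum_lt (s := Finset.univ) (f := fun _ => (0 : ℝ))
    (g := M.δ a) (by simp [M.rowsum a])
  exact ⟨b, hb⟩

lemma edge_self_of_mem {a : S} (ha : a ∈ M.T) : M.edge a a := by
  simp [edge, M.absorbing a ha]

lemma pmin_nonneg : 0 ≤ M.pmin :=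
  Real.sInf_nonneg fun _ hp => hp.1.le

lemma pmin_le_δ {a b : S} (h : M.edge a b) : M.pmin ≤ M.δ a b :=
  csInf_le ⟨0, fun _ hp => hp.1.le⟩ ⟨h, a, b, rfl⟩

lemma pmin_le_one [Nonempty S] : M.pmin ≤ 1 := by
  obtain ⟨b, hb⟩ := M.exists_edge (Classical.arbitrary S)
  exact (M.pmin_le_δ hb).trans (M.δ_le_one _ _)

lemma pmin_pos [Nonempty S] : 0 < M.pmin := by
  obtain ⟨b, hb⟩ := M.exists_edge (Classical.arbitrary S)
  have hne : {p : ℝ | 0 < p ∧ ∃ s s' : S, M.δ s s' = p}.Nonempty := ⟨_, hb, _, b, rfl⟩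
  exact (hne.csInf_mem <| (Set.finite_range fun x : S × S => M.δ x.1 x.2).subset
    fun _ ⟨_, s, s', h⟩ => ⟨(s, s'), h⟩).1

lemma pathLen_edge_of_le {n m : ℕ} {s a : S} (ha : a ∈ M.T) (h : pathLen M.edge n s a)
    (hnm : n ≤ m) : pathLen M.edge m s a := by
  simpa [Nat.add_sub_cancel' hnm] using
    pathLen_append h (pathLen_self_of_rel (M.edge_self_of_mem ha) (m - n))

lemma level0_eq_T (hreach : ∀ a, reaches M.edge (M.T : Set S) a) :
    M.level0 = (M.T : Set S) := by
  ext a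
  simp [level0, hreach a]

lemma mem_levelSet_distTo (s : S) : s ∈ M.levelSet (distTo M.edge M.level0 s) := by
  cases hd : distTo M.edge M.level0 s with
  | zero =>
    by_contra hs
    have hsT : reaches M.edge (M.T : Set S) s := by
      by_contra h
      exact hs (Or.inr h)
    obtain ⟨n, a, ha, hp⟩ := hsT
    obtain ⟨b, hb, hpb⟩ := exists_pathLen_distTo (A := M.level0) ⟨n, a, Or.inl ha, hp⟩
    rw [hd] at hpb
    exact hs (hpb ▸ hb)
  | succ d => exact hd

lemma distTo_level0_le {k : ℕ} (hlev : M.hasLevels k) (s : S) :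
    distTo M.edge M.level0 s ≤ k := by
  by_contra! h
  simpa [hlev.2 _ h] using M.mem_levelSet_distTo s

lemma exists_pathLen_of_mem_levelSet (hreach : ∀ a, reaches M.edge (M.T : Set S) a)
    {i : ℕ} {s : S} (hs : s ∈ M.levelSet i) : ∃ a ∈ M.T, pathLen M.edge i s a := by
  cases i with
  | zero =>
    have hs : s ∈ M.level0 := hs
    rw [M.level0_eq_T hreach] at hs
    exact ⟨s, hs, rfl⟩
  | succ i =>
    have hd : distTo M.edge M.level0 s = i + 1 := hs
    rw [M.level0_eq_T hreach] at hd
    simpa [hd] using exists_pathLen_distTo (hreach s)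

lemma exists_pathLen_of_hasLevels (hreach : ∀ a, reaches M.edge (M.T : Set S) a) {k : ℕ}
    (hlev : M.hasLevels k) (s : S) : ∃ a ∈ M.T, pathLen M.edge k s a := by
  obtain ⟨a, ha, hp⟩ := M.exists_pathLen_of_mem_levelSet hreach (M.mem_levelSet_distTo s)
  exact ⟨a, ha, M.pathLen_edge_of_le ha hp (M.distTo_level0_le hlev s)⟩

lemma sspUpdate_sub (w u v : S → ℝ) :
    M.sspUpdate w u - M.sspUpdate w v = M.reachUpdate 0 (u - v) := by
  ext s
  by_cases hs : s ∈ M.T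
  · simp [sspUpdate, reachUpdate, hs]
  · simp [sspUpdate, reachUpdate, hs, mul_sub]

lemma iterate_sspUpdate_sub (w u v : S → ℝ) (n : ℕ) :
    (M.sspUpdate w)^[n] u - (M.sspUpdate w)^[n] v = (M.reachUpdate 0)^[n] (u - v) := by
  induction n with
  | zero => rfl
  | succ n ih => simp only [Function.iterate_succ_apply', sspUpdate_sub, ih]

lemma reachUpdate_zero_of_mem (v : S → ℝ) {s : S} (hs : s ∈ M.T) : M.reachUpdate 0 v s = 0 := by
  simp [reachUpdate, hs]

lemma iterate_reachUpdate_zero_of_mem {v : S → ℝ} (hv : ∀ a ∈ M.T, v a = 0) (n : ℕ) :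
    ∀ s ∈ M.T, (M.reachUpdate 0)^[n] v s = 0 := by
  intro s hs
  cases n with
  | zero => exact hv s hs
  | succ n => rw [Function.iterate_succ_apply', M.reachUpdate_zero_of_mem _ hs]

lemma mapsTo_reachUpdate_zero_Icc {B : ℝ} (hB : 0 ≤ B) :
    Set.MapsTo (M.reachUpdate 0) (Set.Icc 0 fun _ => B) (Set.Icc 0 fun _ => B) := by
  intro v ⟨hv₀, hvB⟩
  constructor <;> intro s <;> by_cases hs : s ∈ M.T <;>
    simp only [reachUpdate, hs, if_true, if_false, Pi.zero_apply, le_refl, hB]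
  · exact Finset.sum_nonneg fun a _ => mul_nonneg (M.nonneg s a) (hv₀ a)
  · calc ∑ a, M.δ s a * v a ≤ ∑ a, M.δ s a * B :=
          Finset.sum_le_sum fun a _ => mul_le_mul_of_nonneg_left (hvB a) (M.nonneg s a)
      _ = B := by rw [← Finset.sum_mul, M.rowsum, one_mul]

lemma reachUpdate_zero_le_of_edge {u : S → ℝ} {B c : ℝ} {s b : S} (hu : ∀ a, u a ≤ B)
    (hc : 0 ≤ c) (hcB : c ≤ B) (hb : u b ≤ c) (hsb : M.edge s b) :
    M.reachUpdate 0 u s ≤ B - M.pmin * (B - c) := by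
  have hp := M.pmin_le_δ hsb
  have hδ := M.δ_le_one s b
  by_cases hs : s ∈ M.T
  · rw [M.reachUpdate_zero_of_mem u hs]
    nlinarith
  have hsum : ∑ a, M.δ s a * u a = B - ∑ a, M.δ s a * (B - u a) := by
    simp [mul_sub, Finset.sum_sub_distrib, ← Finset.sum_mul, M.rowsum]
  have hgap : M.δ s b * (B - u b) ≤ ∑ a, M.δ s a * (B - u a) :=
    Finset.single_le_sum (f := fun a => M.δ s a * (B - u a))
      (fun a _ => mul_nonneg (M.nonneg s a) (sub_nonneg.2 (hu a))) (Finset.mem_univ b)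
  simp only [reachUpdate, hs, if_false, Pi.zero_apply, hsum]
  nlinarith [mul_le_mul_of_nonneg_right hp (sub_nonneg.2 hcB),
    mul_le_mul_of_nonneg_left hb (M.nonneg s b)]

lemma iterate_reachUpdate_zero_le_of_pathLen {v : S → ℝ} {B : ℝ}
    (hv : v ∈ Set.Icc 0 fun _ => B) (hT : ∀ a ∈ M.T, v a = 0) {j : ℕ} {s a : S}
    (ha : a ∈ M.T) (hp : pathLen M.edge j s a) :
    (M.reachUpdate 0)^[j] v s ≤ (1 - M.pmin ^ j) * B := by
  induction j generalizing s with
  | zero =>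
    obtain rfl : s = a := hp
    simp [hT s ha]
  | succ j ih =>
    obtain ⟨b, hsb, hb⟩ := hp
    have hB : 0 ≤ B := (hv.1 s).trans (hv.2 s)
    have hpj : M.pmin ^ j ≤ 1 :=
      pow_le_one₀ M.pmin_nonneg ((M.pmin_le_δ hsb).trans (M.δ_le_one s b))
    have hpj₀ : 0 ≤ M.pmin ^ j := pow_nonneg M.pmin_nonneg j
    rw [Function.iterate_succ_apply']
    calc M.reachUpdate 0 ((M.reachUpdate 0)^[j] v) s
        ≤ B - M.pmin * (B - (1 - M.pmin ^ j) * B) :=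
          M.reachUpdate_zero_le_of_edge (((M.mapsTo_reachUpdate_zero_Icc hB).iterate j hv).2)
            (by nlinarith) (by nlinarith) (ih hb) hsb
      _ = (1 - M.pmin ^ (j + 1)) * B := by ring

lemma iterate_reachUpdate_zero_le_of_pathLen_of_le {v : S → ℝ} {B : ℝ}
    (hv : v ∈ Set.Icc 0 fun _ => B) (hT : ∀ a ∈ M.T, v a = 0) {j n : ℕ} {s a : S}
    (ha : a ∈ M.T) (hp : pathLen M.edge j s a) (hjn : j ≤ n) :
    (M.reachUpdate 0)^[n] v s ≤ (1 - M.pmin ^ j) * B := by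
  have hB : 0 ≤ B := (hv.1 s).trans (hv.2 s)
  obtain ⟨l, rfl⟩ := Nat.exists_eq_add_of_le hjn
  rw [Function.iterate_add_apply]
  exact M.iterate_reachUpdate_zero_le_of_pathLen ((M.mapsTo_reachUpdate_zero_Icc hB).iterate l hv)
    (M.iterate_reachUpdate_zero_of_mem hT l) ha hp

lemma iterate_reachUpdate_zero_mem_Icc_pow [Nonempty S] {k : ℕ}
    (hpath : ∀ s, ∃ a ∈ M.T, pathLen M.edge k s a) {v : S → ℝ} {B : ℝ}
    (hv : v ∈ Set.Icc 0 fun _ => B) (hT : ∀ a ∈ M.T, v a = 0) (m : ℕ) :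
    (M.reachUpdate 0)^[k * m] v ∈ Set.Icc 0 fun _ => (1 - M.pmin ^ k) ^ m * B := by
  induction m with
  | zero => simpa using hv
  | succ m ih =>
    have hB : 0 ≤ (1 - M.pmin ^ k) ^ m * B :=
      (ih.1 (Classical.arbitrary S)).trans (ih.2 (Classical.arbitrary S))
    rw [show k * (m + 1) = k + k * m by ring, Function.iterate_add_apply]
    refine ⟨((M.mapsTo_reachUpdate_zero_Icc hB).iterate k ih).1, fun s => ?_⟩
    obtain ⟨a, ha, hp⟩ := hpath s
    calc (M.reachUpdate 0)^[k] ((M.reachUpdate 0)^[k * m] v) s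
        ≤ (1 - M.pmin ^ k) * ((1 - M.pmin ^ k) ^ m * B) :=
          M.iterate_reachUpdate_zero_le_of_pathLen ih (M.iterate_reachUpdate_zero_of_mem hT _) ha hp
      _ = (1 - M.pmin ^ k) ^ (m + 1) * B := by ring

lemma ite_sub_ite_mem_Icc (w : S → ℝ) {m C : ℝ} (hm : 0 ≤ m) (hmC : m ≤ C) :
    ((fun a => if a ∈ M.T then w a else C) - fun a => if a ∈ M.T then w a else m) ∈
      Set.Icc 0 fun _ => C := by
  constructor <;> intro a <;> by_cases ha : a ∈ M.T <;> simp [ha] <;> linarith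

end MC

theorem stmt_2_general {S : Type} [Fintype S] [DecidableEq S]
    (M : MC S) (k : ℕ) (hlev : M.hasLevels k)
    (hreach : ∀ a : S, reaches M.edge (M.T : Set S) a)
    (w : S → ℝ) (hw : ∀ a : S, 0 < w a) :
    ∀ t : ℕ, 1 ≤ t → ∀ i : ℕ, i ≤ k → ∀ s ∈ M.levelSet i,
      (M.sspUpdate w)^[k * t]
          (fun a => if a ∈ M.T then w a
            else sSup (Set.range w) * ((k : ℝ) + 1) / M.pmin ^ k) s
        - (M.sspUpdate w)^[k * t]
          (fun a => if a ∈ M.T then w a else sInf (Set.range w)) s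
      ≤ (1 - M.pmin ^ i) * (1 - M.pmin ^ k) ^ (t - 1)
          * (sSup (Set.range w) * ((k : ℝ) + 1) / M.pmin ^ k) := by
  intro t ht i hi s hs
  have : Nonempty S := ⟨s⟩
  obtain ⟨t, rfl⟩ : ∃ t', t = t' + 1 := ⟨t - 1, by omega⟩
  have hpk : 0 < M.pmin ^ k := pow_pos M.pmin_pos k
  have hpk₁ : M.pmin ^ k ≤ 1 := pow_le_one₀ M.pmin_nonneg M.pmin_le_one
  have hwmax : w s ≤ sSup (Set.range w) := le_csSup (Set.finite_range w).bddAbove ⟨s, rfl⟩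
  have hwmin : sInf (Set.range w) ≤ w s := csInf_le (Set.finite_range w).bddBelow ⟨s, rfl⟩
  set C := sSup (Set.range w) * ((k : ℝ) + 1) / M.pmin ^ k
  have hC : sSup (Set.range w) ≤ C := by
    rw [le_div_iff₀ hpk]
    nlinarith [hw s]
  have hwmin₀ : 0 ≤ sInf (Set.range w) :=
    Real.sInf_nonneg (Set.forall_mem_range.2 fun a => (hw a).le)
  set D₀ := (fun a => if a ∈ M.T then w a else C) -
    fun a => if a ∈ M.T then w a else sInf (Set.range w)
  have hD₀ : D₀ ∈ Set.Icc 0 fun _ => C := M.ite_sub_ite_mem_Icc w hwmin₀ (by linarith)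
  have hD₀T : ∀ a ∈ M.T, D₀ a = 0 := fun a ha => by simp [D₀, ha]
  obtain ⟨a, ha, hp⟩ := M.exists_pathLen_of_mem_levelSet hreach hs
  rw [← Pi.sub_apply, M.iterate_sspUpdate_sub, show k * (t + 1) = k + k * t by ring,
    Function.iterate_add_apply, Nat.add_sub_cancel]
  calc _ ≤ (1 - M.pmin ^ i) * ((1 - M.pmin ^ k) ^ t * C) :=
        M.iterate_reachUpdate_zero_le_of_pathLen_of_le
          (M.iterate_reachUpdate_zero_mem_Icc_pow (M.exists_pathLen_of_hasLevels hreach hlev)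
            hD₀ hD₀T t) (M.iterate_reachUpdate_zero_of_mem hD₀T _) ha hp hi
    _ = _ := by ring

/-- Speed of convergence of interval value iteration for SSP:
in a Markov chain with `k ≥ 1` levels in which every state can reach `T`, after
`k·t` SSP Bellman updates starting from the initial lower and upper vectors, the
interval at any state of level `i` has size at most
`(1 - p_min^i)·(1 - p_min^k)^(t-1)·C` where `C = w_max·(k+1)/p_min^k`. -/
theorem stmt_2 {S : Type} [Fintype S] [DecidableEq S] [Nonempty S]
    (M : MC S) (k : ℕ) (hk : 1 ≤ k) (hlev : M.hasLevels k)
    (hreach : ∀ a : S, reaches M.edge (M.T : Set S) a)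
    (w : S → ℝ) (hw : ∀ a : S, 0 < w a) :
    ∀ t : ℕ, 1 ≤ t → ∀ i : ℕ, i ≤ k → ∀ s ∈ M.levelSet i,
      (M.sspUpdate w)^[k * t]
          (fun a => if a ∈ M.T then w a
            else sSup (Set.range w) * ((k : ℝ) + 1) / M.pmin ^ k) s
        - (M.sspUpdate w)^[k * t]
          (fun a => if a ∈ M.T then w a else sInf (Set.range w)) s
      ≤ (1 - M.pmin ^ i) * (1 - M.pmin ^ k) ^ (t - 1)
          * (sSup (Set.range w) * ((k : ℝ) + 1) / M.pmin ^ k) :=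
  stmt_2_general M k hlev hreach w hw
end

section
/- Let M be a Markov chain with targets T and weight function w : T → [0,∞) in which every state can reach T along edges, let s ∉ T, and let γ ≥ 0. Let f : S → ℝ be any vector with f ≤ val_{M[s=γ]} pointwise, where val_{M[s=γ]} is the weighted reachability value vector of the reduced MC M[s = γ], and set γ' := ∑_{s'} δ(s,s') f(s'). If γ' > γ, then val_M(s) > γ, where val_M is the weighted reachability value vector of M. -/
variable {S : Type} [Fintype S] [DecidableEq S]

/-! If `val_M(s) ≤ γ`, then `val_M + (γ - val_M(s))` is a nonnegative harmonic function of
`M[s = γ]` dominating its target weights. The value of a chain is the least such majorant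
(its finite-horizon approximations stay below any of them), so `val_{M[s=γ]}` lies below it,
and averaging over the successors of `s` gives `γ' ≤ val_M(s) + (γ - val_M(s)) = γ`. -/

open Filter Topology

namespace MC

noncomputable def reachValBy (M : MC S) (w : S → ℝ) (n : ℕ) (a : S) : ℝ :=
  ∑ t ∈ M.T, (M.P ^ n) a t * w t

variable (M : MC S) (w : S → ℝ)

lemma reachValBy_zero (a : S) : M.reachValBy w 0 a = if a ∈ M.T then w a else 0 := by
  simp [reachValBy, Matrix.one_apply]

lemma reachValBy_succ (n : ℕ) (a : S) :
    M.reachValBy w (n + 1) a = ∑ b, M.δ a b * M.reachValBy w n b := by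
  simp only [reachValBy, pow_succ', Matrix.mul_apply, Finset.sum_mul, Finset.mul_sum]
  rw [Finset.sum_comm]
  simp only [P, Matrix.of_apply, mul_assoc]

lemma reachValBy_le_of_superharmonic {u : S → ℝ} (huT : ∀ t ∈ M.T, w t ≤ u t)
    (hu0 : ∀ a ∉ M.T, 0 ≤ u a) (hu : ∀ a, ∑ b, M.δ a b * u b ≤ u a) (n : ℕ) (a : S) :
    M.reachValBy w n a ≤ u a := by
  induction n generalizing a with
  | zero =>
    rw [reachValBy_zero]
    split_ifs with ha
    exacts [huT a ha, hu0 a ha]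
  | succ n ih =>
    rw [reachValBy_succ]
    exact (Finset.sum_le_sum fun b _ => mul_le_mul_of_nonneg_left (ih b) (M.nonneg a b)).trans
      (hu a)

lemma bddAbove_range_reachValBy (a : S) : BddAbove (Set.range fun n => M.reachValBy w n a) := by
  set C := ∑ t ∈ M.T, |w t|
  have hC : 0 ≤ C := Finset.sum_nonneg fun t _ => abs_nonneg (w t)
  refine ⟨C, Set.forall_mem_range.2 fun n => M.reachValBy_le_of_superharmonic w (u := fun _ => C)
    (fun t ht => (le_abs_self (w t)).trans (Finset.single_le_sum (fun t _ => abs_nonneg (w t)) ht))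
    (fun _ _ => hC) (fun b => ?_) n a⟩
  rw [← Finset.sum_mul, M.rowsum, one_mul]

lemma reachValBy_le_reachVal (n : ℕ) (a : S) : M.reachValBy w n a ≤ M.reachVal w a :=
  le_ciSup (M.bddAbove_range_reachValBy w a) n

lemma le_reachVal_of_mem {t : S} (ht : t ∈ M.T) : w t ≤ M.reachVal w t := by
  simpa [reachValBy_zero, ht] using M.reachValBy_le_reachVal w 0 t

lemma reachVal_le_of_superharmonic {u : S → ℝ} (huT : ∀ t ∈ M.T, w t ≤ u t)
    (hu0 : ∀ a ∉ M.T, 0 ≤ u a) (hu : ∀ a, ∑ b, M.δ a b * u b ≤ u a) (a : S) :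
    M.reachVal w a ≤ u a :=
  ciSup_le fun n => M.reachValBy_le_of_superharmonic w huT hu0 hu n a

variable {w}

lemma reachValBy_zero_nonneg (hw : ∀ t ∈ M.T, 0 ≤ w t) (a : S) :
    0 ≤ M.reachValBy w 0 a := by
  rw [reachValBy_zero]
  split_ifs with ha
  exacts [hw a ha, le_rfl]

lemma reachVal_nonneg (hw : ∀ t ∈ M.T, 0 ≤ w t) (a : S) : 0 ≤ M.reachVal w a :=
  (M.reachValBy_zero_nonneg hw a).trans (M.reachValBy_le_reachVal w 0 a)

lemma reachValBy_monotone (hw : ∀ t ∈ M.T, 0 ≤ w t) (a : S) :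
    Monotone fun n => M.reachValBy w n a := by
  suffices h : ∀ n a, M.reachValBy w n a ≤ M.reachValBy w (n + 1) a from
    monotone_nat_of_le_succ fun n => h n a
  intro n
  induction n with
  | zero =>
    intro a
    have hterm : ∀ b ∈ Finset.univ, 0 ≤ M.δ a b * M.reachValBy w 0 b :=
      fun b _ => mul_nonneg (M.nonneg a b) (M.reachValBy_zero_nonneg hw b)
    rw [reachValBy_succ]
    by_cases ha : a ∈ M.T
    · calc M.reachValBy w 0 a = M.δ a a * M.reachValBy w 0 a := by rw [M.absorbing a ha, one_mul]
        _ ≤ _ := Finset.single_le_sum hterm (Finset.mem_univ a)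
    · rw [reachValBy_zero, if_neg ha]
      exact Finset.sum_nonneg hterm
  | succ n ih =>
    intro a
    rw [reachValBy_succ, M.reachValBy_succ w (n + 1)]
    exact Finset.sum_le_sum fun b _ => mul_le_mul_of_nonneg_left (ih b) (M.nonneg a b)

lemma tendsto_reachValBy (hw : ∀ t ∈ M.T, 0 ≤ w t) (a : S) :
    Tendsto (fun n => M.reachValBy w n a) atTop (𝓝 (M.reachVal w a)) :=
  tendsto_atTop_ciSup (M.reachValBy_monotone hw a) (M.bddAbove_range_reachValBy w a)

lemma reachVal_eq_sum (hw : ∀ t ∈ M.T, 0 ≤ w t) (a : S) :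
    M.reachVal w a = ∑ b, M.δ a b * M.reachVal w b := by
  have hshift := (M.tendsto_reachValBy hw a).comp (tendsto_add_atTop_nat 1)
  simp only [Function.comp_def, reachValBy_succ] at hshift
  exact tendsto_nhds_unique hshift
    (tendsto_finsetSum _ fun b _ => (M.tendsto_reachValBy hw b).const_mul _)

lemma sum_δ_mul_reachVal_add (hw : ∀ t ∈ M.T, 0 ≤ w t) (k : ℝ) (a : S) :
    ∑ b, M.δ a b * (M.reachVal w b + k) = M.reachVal w a + k := by
  simp only [mul_add, Finset.sum_add_distrib, ← Finset.sum_mul, M.rowsum, one_mul,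
    ← M.reachVal_eq_sum hw]

end MC

theorem stmt_4_general {S : Type} [Fintype S] [DecidableEq S]
    (M : MC S)
    (w : S → ℝ) (hw : ∀ t ∈ M.T, 0 ≤ w t)
    (s : S) (γ : ℝ)
    (f : S → ℝ)
    (hf : ∀ a : S, f a ≤ (M.reduce s).reachVal (Function.update w s γ) a)
    (h : γ < ∑ s' : S, M.δ s s' * f s') :
    γ < M.reachVal w s := by
  by_contra! hle
  set u : S → ℝ := fun b => M.reachVal w b + (γ - M.reachVal w s)
  have hharm : ∀ a, ∑ b, (M.reduce s).δ a b * u b = u a := by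
    intro a
    by_cases ha : a = s
    · simp [MC.reduce, ha]
    · simpa [MC.reduce, ha] using M.sum_δ_mul_reachVal_add hw _ a
  have hdom : ∀ b, (M.reduce s).reachVal (Function.update w s γ) b ≤ u b := by
    refine (M.reduce s).reachVal_le_of_superharmonic _ (fun t ht => ?_)
      (fun b _ => by linarith [M.reachVal_nonneg hw b]) (fun a => (hharm a).le)
    rcases eq_or_ne t s with rfl | hts
    · simp [u]
    · have htT : t ∈ M.T := by simpa [MC.reduce, hts] using ht
      simp only [Function.update_of_ne hts, u]
      linarith [M.le_reachVal_of_mem w htT]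
  have := calc γ < ∑ b, M.δ s b * f b := h
    _ ≤ ∑ b, M.δ s b * u b := Finset.sum_le_sum fun b _ =>
      mul_le_mul_of_nonneg_left ((hf b).trans (hdom b)) (M.nonneg s b)
    _ = γ := by rw [M.sum_δ_mul_reachVal_add hw]; ring
  exact this.false

/-- Verification of a guess as a lower bound: if `f` is a pointwise
lower bound on the weighted reachability value vector of the reduced Markov chain
`M[s = γ]` and `γ' = ∑_{s'} δ(s,s')·f(s') > γ`, then `val_M(s) > γ`. -/
theorem stmt_4 {S : Type} [Fintype S] [DecidableEq S] [Nonempty S]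
    (M : MC S) (hreach : ∀ a : S, reaches M.edge (M.T : Set S) a)
    (w : S → ℝ) (hw : ∀ t ∈ M.T, 0 ≤ w t)
    (s : S) (hs : s ∉ M.T) (γ : ℝ) (hγ : 0 ≤ γ)
    (f : S → ℝ)
    (hf : ∀ a : S, f a ≤ (M.reduce s).reachVal (Function.update w s γ) a)
    (h : γ < ∑ s' : S, M.δ s s' * f s') :
    γ < M.reachVal w s :=
  stmt_4_general M w hw s γ f hf h
end

section
/- Let M be a Markov chain with targets T and weight function w : T → [0,∞) in which every state can reach T along edges; let s ∉ T, and let γ, ε ∈ ℝ with ε > 0 and γ − ε ≥ 0. Then for every state s' ∈ S with s' ≠ s: val_{M[s=γ]}(s') = val_{M[s=γ−ε]}(s') + ε · P_{s'}(∃ t ≥ 0 : X_t = s), where val_{M[s=γ]} and val_{M[s=γ−ε]} are the weighted reachability value vectors of the respective reduced MCs, and the probability of ever visiting s is taken in M. -/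
variable {S : Type} [Fintype S] [DecidableEq S]

/-!
The reachability value of `M[s = ·]` is the limit of `∑_{t ∈ T} (δⁿ)(s', t) · w(t)`, which is
linear in the weight `w`. Raising the weight of the single target `s` by `ε` therefore adds `ε`
times the value for the indicator weight of `s`, and that value is the probability of ever
visiting `s`.
-/

open Filter Topology

namespace MC

variable (N : MC S)

lemma P_mem_rowStochastic : N.P ∈ Matrix.rowStochastic ℝ S :=
  Matrix.mem_rowStochastic_iff_sum.2 ⟨N.nonneg, N.rowsum⟩

lemma P_pow_mem_rowStochastic (n : ℕ) : N.P ^ n ∈ Matrix.rowStochastic ℝ S :=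
  pow_mem N.P_mem_rowStochastic n

/-- Mass that has reached an absorbing target never leaves it. -/
lemma monotone_P_pow_apply_of_mem {t : S} (ht : t ∈ N.T) (a : S) :
    Monotone fun n => (N.P ^ n) a t := by
  refine monotone_nat_of_le_succ fun n => ?_
  rw [pow_succ, Matrix.mul_apply]
  calc (N.P ^ n) a t = (N.P ^ n) a t * N.δ t t := by rw [N.absorbing t ht, mul_one]
    _ ≤ ∑ c : S, (N.P ^ n) a c * N.δ c t :=
        Finset.single_le_sum (f := fun c => (N.P ^ n) a c * N.δ c t)
          (fun c _ => mul_nonneg (Matrix.nonneg_of_mem_rowStochastic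
            (N.P_pow_mem_rowStochastic n)) (N.nonneg c t))
          (Finset.mem_univ t)

lemma tendsto_reachVal {w : S → ℝ} (hw : ∀ t ∈ N.T, 0 ≤ w t) (a : S) :
    Tendsto (fun n => ∑ t ∈ N.T, (N.P ^ n) a t * w t) atTop (𝓝 (N.reachVal w a)) := by
  refine tendsto_atTop_ciSup (fun m n hmn => ?_) ⟨∑ t ∈ N.T, w t, ?_⟩
  · exact Finset.sum_le_sum fun t ht =>
      mul_le_mul_of_nonneg_right (N.monotone_P_pow_apply_of_mem ht a hmn) (hw t ht)
  · rintro x ⟨n, rfl⟩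
    exact Finset.sum_le_sum fun t ht => mul_le_of_le_one_left (hw t ht)
      (Matrix.le_one_of_mem_rowStochastic (N.P_pow_mem_rowStochastic n))

lemma reachVal_add_smul {w₁ w₂ : S → ℝ} (hw₁ : ∀ t ∈ N.T, 0 ≤ w₁ t)
    (hw₂ : ∀ t ∈ N.T, 0 ≤ w₂ t) {c : ℝ} (hc : 0 ≤ c) (a : S) :
    N.reachVal (w₁ + c • w₂) a = N.reachVal w₁ a + c * N.reachVal w₂ a := by
  have hw : ∀ t ∈ N.T, 0 ≤ (w₁ + c • w₂) t := fun t ht =>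
    add_nonneg (hw₁ t ht) (smul_nonneg hc (hw₂ t ht))
  refine tendsto_nhds_unique (N.tendsto_reachVal hw a) ?_
  convert (N.tendsto_reachVal hw₁ a).add ((N.tendsto_reachVal hw₂ a).const_mul c) using 1
  ext n
  simp only [Pi.add_apply, Pi.smul_apply, smul_eq_mul, mul_add, Finset.sum_add_distrib,
    Finset.mul_sum]
  congr 1
  exact Finset.sum_congr rfl fun t _ => by ring

end MC

theorem stmt_8_general {S : Type} [Fintype S] [DecidableEq S]
    (M : MC S)
    (w : S → ℝ) (hw : ∀ t ∈ M.T, 0 ≤ w t)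
    (s : S) (γ ε : ℝ) (hε : 0 < ε) (hγε : 0 ≤ γ - ε) :
    ∀ s' : S, s' ≠ s →
      (M.reduce s).reachVal (Function.update w s γ) s'
        = (M.reduce s).reachVal (Function.update w s (γ - ε)) s'
          + ε * M.hitProb s' s := by
  intro s' _
  have hsplit : Function.update w s γ
      = Function.update w s (γ - ε) + ε • fun b => if b = s then 1 else 0 := by
    funext b
    by_cases hb : b = s <;> simp [hb]
  have hw_update : ∀ t ∈ (M.reduce s).T, 0 ≤ Function.update w s (γ - ε) t := by
    intro t ht
    by_cases hts : t = s
    · simpa [hts] using hγε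
    · simpa [hts] using hw t (Finset.mem_of_mem_insert_of_ne ht hts)
  rw [hsplit, MC.hitProb]
  exact (M.reduce s).reachVal_add_smul hw_update (fun t _ => by split_ifs <;> norm_num) hε.le s'

/-- Sensitivity of reachability values of reduced chains in the guess:
for every state `s' ≠ s`,
`val_{M[s=γ]}(s') = val_{M[s=γ-ε]}(s') + ε · P_{s'}(∃ t ≥ 0, X_t = s)`. -/
theorem stmt_8 {S : Type} [Fintype S] [DecidableEq S] [Nonempty S]
    (M : MC S) (hreach : ∀ a : S, reaches M.edge (M.T : Set S) a)
    (w : S → ℝ) (hw : ∀ t ∈ M.T, 0 ≤ w t)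
    (s : S) (hs : s ∉ M.T) (γ ε : ℝ) (hε : 0 < ε) (hγε : 0 ≤ γ - ε) :
    ∀ s' : S, s' ≠ s →
      (M.reduce s).reachVal (Function.update w s γ) s'
        = (M.reduce s).reachVal (Function.update w s (γ - ε)) s'
          + ε * M.hitProb s' s :=
  stmt_8_general M w hw s γ ε hε hγε
end
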